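/- arXiv:1810.00616 — 2 statements merged into one kernel-verified Lean document; each statement's English description precedes it below -/
import Mathlib

section
/- Dixon's identity (central value form): for all even nonnegative integers m, n, k with k ≤ min(m,n), Σ_{l=0}^{k} (-1)^l · C((m+n-2k)/2, m/2 - l) · C(m/2, k-l) · C(n/2, l) = (-1)^{k/2} · ((m+n-k)/2)! / ( ((m-k)/2)! · ((n-k)/2)! · (k/2)! ). -/
open Finset

/-- Integer binomial coefficient: `C(a,b) = 0` when `b < 0` or `b > a`. -/
def ch (a b : ℤ) : ℤ := if 0 ≤ b ∧ b ≤ a then ((a.toNat).choose b.toNat : ℤ) else 0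

/-- Clebsch-Gordan sum `c_{m,n,k}(i,j)`. -/
def cg (m n k i j : ℕ) : ℤ :=
  ∑ l ∈ Finset.range (k+1),
    (-1:ℤ)^l * ch ((i:ℤ)+(j:ℤ)-(k:ℤ)) ((i:ℤ)-(l:ℤ))
      * ch ((m:ℤ)-(l:ℤ)) ((k:ℤ)-(l:ℤ)) * ch ((n:ℤ)-(k:ℤ)+(l:ℤ)) (l:ℤ)

/-- Trinomial coefficient `(a+b+c)! / (a! b! c!)`. -/
def mult (a b c : ℕ) : ℕ := (a+b+c).factorial / (a.factorial * b.factorial * c.factorial)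

lemma ch_neg {a b : ℤ} (h : b < 0) : ch a b = 0 := by
  simp only [ch, if_neg]; omega

lemma ch_gt {a b : ℤ} (h : a < b) : ch a b = 0 := by
  simp only [ch, if_neg]; omega

lemma ch_nat (a b : ℕ) (h : b ≤ a) : ch (a:ℤ) (b:ℤ) = (a.choose b : ℤ) := by
  rw [ch, if_pos (by omega)]
  simp

lemma chR1 (a : ℕ) (b : ℤ) :
    ((a:ℤ)+1) * ch a b = ch ((a:ℤ)+1) (b+1) * (b+1) := by
  by_cases h : 0 ≤ b ∧ b ≤ (a:ℤ)
  · rw [ch, if_pos h, ch, if_pos (by omega)]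
    have h1 : ((a:ℤ)).toNat = a := by omega
    have h2 : ((a:ℤ)+1).toNat = a + 1 := by omega
    have h3 : (b+1).toNat = b.toNat + 1 := by omega
    rw [h1, h2, h3]
    have := Nat.add_one_mul_choose_eq a b.toNat
    have hb : (b.toNat : ℤ) = b := by omega
    push_cast at this ⊢
    rw [← hb]
    exact_mod_cast this
  · rw [ch, if_neg h]
    by_cases h2 : 0 ≤ b + 1 ∧ b + 1 ≤ (a:ℤ)+1
    · have hb : b = -1 := by omega
      subst hb; simp
    · rw [ch, if_neg h2]; ring

lemma chR2 (a : ℕ) (b : ℤ) :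
    ch a (b+1) * (b+1) = ch a b * ((a:ℤ) - b) := by
  by_cases h : 0 ≤ b ∧ b + 1 ≤ (a:ℤ)
  · rw [ch, if_pos (by omega), ch, if_pos (by omega)]
    have h1 : ((a:ℤ)).toNat = a := by omega
    have h3 : (b+1).toNat = b.toNat + 1 := by omega
    rw [h1, h3]
    have := Nat.choose_succ_right_eq a b.toNat
    have hb : (b.toNat : ℤ) = b := by omega
    have hsub : ((a - b.toNat : ℕ) : ℤ) = (a:ℤ) - b := by omega
    calc ((a.choose (b.toNat+1) : ℕ) : ℤ) * (b+1)
        = ((a.choose (b.toNat+1) * (b.toNat+1) : ℕ) : ℤ) := by push_cast; rw [hb]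
      _ = ((a.choose b.toNat * (a - b.toNat) : ℕ) : ℤ) := by rw [this]
      _ = (a.choose b.toNat : ℤ) * ((a:ℤ) - b) := by rw [Nat.cast_mul, hsub]
  · by_cases hb1 : b = -1
    · subst hb1; simp [ch_neg]
    · by_cases hba : b + 1 > (a:ℤ)
      · rw [ch_gt (by omega)]
        by_cases hbb : b > (a:ℤ)
        · rw [ch_gt hbb]; ring
        · have : b = (a:ℤ) := by omega
          rw [this]; ring
      · have : b < 0 := by omega
        rw [ch_neg this, ch_neg (by omega)]; ring

lemma chR3 (a : ℕ) (b : ℤ) :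
    ch a b * ((a:ℤ)+1) = ch ((a:ℤ)+1) b * ((a:ℤ)+1-b) := by
  by_cases h : 0 ≤ b ∧ b ≤ (a:ℤ)
  · rw [ch, if_pos h, ch, if_pos (by omega)]
    have h1 : ((a:ℤ)).toNat = a := by omega
    have h2 : ((a:ℤ)+1).toNat = a + 1 := by omega
    rw [h1, h2]
    have := Nat.choose_mul_succ_eq a b.toNat
    have hb : (b.toNat : ℤ) = b := by omega
    have hsub : ((a + 1 - b.toNat : ℕ) : ℤ) = (a:ℤ) + 1 - b := by omega
    calc ((a.choose b.toNat : ℕ) : ℤ) * ((a:ℤ)+1)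
        = ((a.choose b.toNat * (a+1) : ℕ) : ℤ) := by push_cast; ring
      _ = (((a+1).choose b.toNat * (a + 1 - b.toNat) : ℕ) : ℤ) := by rw [this]
      _ = ((a+1).choose b.toNat : ℤ) * ((a:ℤ)+1-b) := by rw [Nat.cast_mul, hsub]
  · by_cases hb : b = (a:ℤ) + 1
    · subst hb; rw [ch_gt (by omega)]
      rw [show (a:ℤ)+1-((a:ℤ)+1) = 0 by ring]; ring
    · by_cases hbneg : b < 0
      · rw [ch_neg hbneg, ch_neg hbneg]; ring
      · rw [ch_gt (by omega), ch_gt (by omega)]; ring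

/-- Pure algebra core of the WZ certificate. -/
lemma key (a b c L x y z x1 x2 y1 y2 z2 : ℤ)
    (e1 : (a+b+1)*x = x1*(a+c-L+1))
    (e2 : x*(a+b+1) = x2*(b+1-c+L))
    (e3 : y*(a+c+1) = y1*(a+1-c+L))
    (e4 : y1*(2*c-L) = y2*(a+2-c+L))
    (e5 : z2*(L+1) = z*(b+c-L)) :
    2*(a+1+b)*(a+1+c)*((a+1)*(x1*y1*z) - (a+1+b+c)*(x*y*z))
      = (L+1)*(L+1+b-c)*(L+a+2-c)*(x2*y2*z2) + L*(L+b-c)*(L+a+1-c)*(x1*y1*z) := by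
  linear_combination (-(L+1+b-c)*(L+a+2-c)*x2*y2)*e5 + ((L+1+b-c)*(b+c-L)*x2*z)*e4
    + ((b+c-L)*(2*c-L)*y1*z)*e2
    + (-2*(a+1+b+c)*(a+1+c)*y*z-(b+c-L)*(2*c-L)*y1*z)*e1
    + (-2*(a+1+b+c)*(a+c-L+1)*x1*z)*e3

def F (a b c : ℕ) (l : ℕ) : ℤ :=
  (-1:ℤ)^l * ch ((a:ℤ)+(b:ℤ)) ((a:ℤ)+(c:ℤ)-(l:ℤ)) * ch ((a:ℤ)+(c:ℤ)) (2*(c:ℤ)-(l:ℤ))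
    * ch ((b:ℤ)+(c:ℤ)) (l:ℤ)

def G (a b c : ℕ) (l : ℕ) : ℤ :=
  -(l:ℤ)*((l:ℤ)+(b:ℤ)-(c:ℤ))*((l:ℤ)+(a:ℤ)-(c:ℤ)) * F a b c l

lemma cert (A B C l : ℕ) :
    2*((A:ℤ)+1+(B:ℤ))*((A:ℤ)+1+(C:ℤ))
        * (((A:ℤ)+1)*F (A+1) B C l - ((A:ℤ)+1+(B:ℤ)+(C:ℤ))*F A B C l)
      = G (A+1) B C (l+1) - G (A+1) B C l := by
  have e1 := chR1 (A+B) ((A:ℤ)+(C:ℤ)-(l:ℤ))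
  have e2 := chR3 (A+B) ((A:ℤ)+(C:ℤ)-(l:ℤ))
  have e3 := chR3 (A+C) (2*(C:ℤ)-(l:ℤ))
  have e4 := chR2 (A+C+1) (2*(C:ℤ)-(l:ℤ)-1)
  have e5 := chR2 (B+C) (l:ℤ)
  push_cast at e1 e2 e3 e4 e5
  rw [show (2*(C:ℤ)-(l:ℤ)-1+1) = 2*(C:ℤ)-(l:ℤ) by ring] at e4
  have K := key ((A:ℤ)) ((B:ℤ)) ((C:ℤ)) ((l:ℤ))
    (ch ((A:ℤ)+(B:ℤ)) ((A:ℤ)+(C:ℤ)-(l:ℤ)))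
    (ch ((A:ℤ)+(C:ℤ)) (2*(C:ℤ)-(l:ℤ)))
    (ch ((B:ℤ)+(C:ℤ)) (l:ℤ))
    (ch ((A:ℤ)+(B:ℤ)+1) ((A:ℤ)+(C:ℤ)-(l:ℤ)+1))
    (ch ((A:ℤ)+(B:ℤ)+1) ((A:ℤ)+(C:ℤ)-(l:ℤ)))
    (ch ((A:ℤ)+(C:ℤ)+1) (2*(C:ℤ)-(l:ℤ)))
    (ch ((A:ℤ)+(C:ℤ)+1) (2*(C:ℤ)-(l:ℤ)-1))
    (ch ((B:ℤ)+(C:ℤ)) ((l:ℤ)+1))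
    (by linear_combination e1) (by linear_combination e2) (by linear_combination e3)
    (by linear_combination e4) (by linear_combination e5)
  simp only [F, G]
  push_cast
  rw [show ((A:ℤ)+1+(C:ℤ)-((l:ℤ)+1)) = (A:ℤ)+(C:ℤ)-(l:ℤ) by ring,
      show (2*(C:ℤ)-((l:ℤ)+1)) = 2*(C:ℤ)-(l:ℤ)-1 by ring,
      show ((A:ℤ)+1+(C:ℤ)-(l:ℤ)) = (A:ℤ)+(C:ℤ)-(l:ℤ)+1 by ring,
      show ((A:ℤ)+1+(B:ℤ)) = (A:ℤ)+(B:ℤ)+1 by ring,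
      show ((A:ℤ)+1+(C:ℤ)) = (A:ℤ)+(C:ℤ)+1 by ring]
  linear_combination ((-1:ℤ)^l) * K

lemma mult_spec (a b c : ℕ) :
    mult a b c * (a.factorial * b.factorial * c.factorial) = (a+b+c).factorial := by
  apply Nat.div_mul_cancel
  calc a.factorial * b.factorial * c.factorial
      ∣ (a+b).factorial * c.factorial :=
        mul_dvd_mul_right (Nat.factorial_mul_factorial_dvd_factorial_add a b) _
    _ ∣ (a+b+c).factorial := Nat.factorial_mul_factorial_dvd_factorial_add (a+b) c

lemma mult_rec (a b c : ℕ) :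
    ((a:ℤ)+1) * mult (a+1) b c = ((a:ℤ)+1+b+c) * mult a b c := by
  have h1 := mult_spec (a+1) b c
  have h2 := mult_spec a b c
  have hf : ((a+1).factorial : ℤ) = ((a:ℤ)+1) * a.factorial := by
    rw [Nat.factorial_succ]; push_cast; ring
  have hg : ((a+1+b+c).factorial : ℤ) = ((a:ℤ)+1+b+c) * ((a+b+c).factorial : ℤ) := by
    rw [show a+1+b+c = (a+b+c)+1 by omega, Nat.factorial_succ]; push_cast; ring
  have hz : (a.factorial : ℤ) * b.factorial * c.factorial ≠ 0 := by positivity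
  apply mul_right_cancel₀ hz
  have h1' : (mult (a+1) b c : ℤ) * ((a+1).factorial * b.factorial * c.factorial)
      = ((a+1+b+c).factorial : ℤ) := by exact_mod_cast congrArg Nat.cast h1
  have h2' : (mult a b c : ℤ) * (a.factorial * b.factorial * c.factorial)
      = ((a+b+c).factorial : ℤ) := by exact_mod_cast congrArg Nat.cast h2
  calc ((a:ℤ)+1) * mult (a+1) b c * ((a.factorial:ℤ) * b.factorial * c.factorial)
      = (mult (a+1) b c : ℤ) * (((a:ℤ)+1) * a.factorial * b.factorial * c.factorial) := by ring
    _ = (mult (a+1) b c : ℤ) * ((a+1).factorial * b.factorial * c.factorial) := by rw [hf]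
    _ = ((a+1+b+c).factorial : ℤ) := h1'
    _ = ((a:ℤ)+1+b+c) * ((a+b+c).factorial : ℤ) := hg
    _ = ((a:ℤ)+1+b+c) * ((mult a b c : ℤ) * (a.factorial * b.factorial * c.factorial)) := by
        rw [h2']
    _ = ((a:ℤ)+1+b+c) * mult a b c * ((a.factorial:ℤ) * b.factorial * c.factorial) := by ring

lemma mult_zero_left (b c : ℕ) : mult 0 b c = (b+c).choose c := by
  have h1 := mult_spec 0 b c
  have h2 : (b+c).choose c * c.factorial * b.factorial = (b+c).factorial := by
    have := Nat.choose_mul_factorial_mul_factorial (Nat.le_add_left c b)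
    simpa [Nat.add_sub_cancel] using this
  have hz : 0 < b.factorial * c.factorial := by positivity
  apply Nat.eq_of_mul_eq_mul_right hz
  simp only [Nat.factorial_zero, one_mul, zero_add] at h1
  rw [h1]
  calc (b+c).factorial = (b+c).choose c * c.factorial * b.factorial := h2.symm
    _ = (b+c).choose c * (b.factorial * c.factorial) := by ring

def D (a b c : ℕ) : ℤ := ∑ l ∈ Finset.range (2*c+2), F a b c l

lemma D_rec (A B C : ℕ) :
    ((A:ℤ)+1) * D (A+1) B C = ((A:ℤ)+1+(B:ℤ)+(C:ℤ)) * D A B C := by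
  have h0 : G (A+1) B C 0 = 0 := by simp [G]
  have htop : G (A+1) B C (2*C+2) = 0 := by
    have hneg : (2*(C:ℤ)-((2*C+2:ℕ):ℤ)) < 0 := by push_cast; omega
    rw [G, F, ch_neg hneg]; ring
  have h1 : ∑ l ∈ Finset.range (2*C+2),
      (2*((A:ℤ)+1+(B:ℤ))*((A:ℤ)+1+(C:ℤ))
        * (((A:ℤ)+1)*F (A+1) B C l - ((A:ℤ)+1+(B:ℤ)+(C:ℤ))*F A B C l))
      = ∑ l ∈ Finset.range (2*C+2), (G (A+1) B C (l+1) - G (A+1) B C l) :=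
    Finset.sum_congr rfl (fun l _ => cert A B C l)
  rw [Finset.sum_range_sub (fun l => G (A+1) B C l), h0, htop] at h1
  rw [← Finset.mul_sum] at h1
  have h2 : ∑ l ∈ Finset.range (2*C+2),
      (((A:ℤ)+1)*F (A+1) B C l - ((A:ℤ)+1+(B:ℤ)+(C:ℤ))*F A B C l)
      = ((A:ℤ)+1) * D (A+1) B C - ((A:ℤ)+1+(B:ℤ)+(C:ℤ)) * D A B C := by
    rw [Finset.sum_sub_distrib, ← Finset.mul_sum, ← Finset.mul_sum]; rfl
  rw [h2] at h1
  have hP : (2*((A:ℤ)+1+(B:ℤ))*((A:ℤ)+1+(C:ℤ))) ≠ 0 := by positivity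
  have := mul_eq_zero.mp (by linarith [h1] : (2*((A:ℤ)+1+(B:ℤ))*((A:ℤ)+1+(C:ℤ)))
      * (((A:ℤ)+1) * D (A+1) B C - ((A:ℤ)+1+(B:ℤ)+(C:ℤ)) * D A B C) = 0)
  rcases this with h | h
  · exact absurd h hP
  · linarith [h]

lemma D_base (B C : ℕ) : D 0 B C = (-1:ℤ)^C * mult 0 B C := by
  rw [D, Finset.sum_eq_single C]
  · have a1 : ((0:ℕ):ℤ)+(B:ℤ) = ((B:ℕ):ℤ) := by push_cast; ring
    have a2 : ((0:ℕ):ℤ)+(C:ℤ)-((C:ℕ):ℤ) = ((0:ℕ):ℤ) := by push_cast; ring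
    have a3 : ((0:ℕ):ℤ)+(C:ℤ) = ((C:ℕ):ℤ) := by push_cast; ring
    have a4 : 2*(C:ℤ)-((C:ℕ):ℤ) = ((C:ℕ):ℤ) := by ring
    have a5 : (B:ℤ)+(C:ℤ) = ((B+C:ℕ):ℤ) := by push_cast; ring
    rw [F, a2, a3, a4, a5]
    rw [show ((0:ℕ):ℤ)+(B:ℤ) = ((B:ℕ):ℤ) from a1]
    rw [ch_nat B 0 (Nat.zero_le _), ch_nat C C le_rfl, ch_nat (B+C) C (by omega)]
    rw [mult_zero_left]
    simp
  · intro l hl hne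
    rcases Nat.lt_or_ge l C with h | h
    · have : ((0:ℕ):ℤ)+(C:ℤ) < 2*(C:ℤ)-(l:ℤ) := by push_cast; omega
      rw [F, ch_gt this]; ring
    · have hlt : C < l := by omega
      have : ((0:ℕ):ℤ)+(C:ℤ)-(l:ℤ) < 0 := by push_cast; omega
      rw [F, ch_neg this]; ring
  · intro h
    exact absurd (Finset.mem_range.mpr (by omega)) h

lemma dixon (A B C : ℕ) : D A B C = (-1:ℤ)^C * mult A B C := by
  induction A with
  | zero => exact D_base B C
  | succ A ih =>
    have hrec := D_rec A B C
    have h2 := mult_rec A B C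
    have hA : ((A:ℤ)+1) ≠ 0 := by positivity
    apply mul_left_cancel₀ hA
    push_cast at hrec h2 ⊢
    linear_combination hrec + ((A:ℤ)+1+(B:ℤ)+(C:ℤ))*ih - ((-1:ℤ)^C)*h2

theorem stmt_7 (m n k : ℕ) (hm : Even m) (hn : Even n) (hk : Even k)
    (hkm : k ≤ m) (hkn : k ≤ n) :
    ∑ l ∈ Finset.range (k+1),
        (-1:ℤ)^l * ch (((m + n - 2*k)/2 : ℕ) : ℤ) (((m/2 : ℕ) : ℤ) - (l:ℤ))
          * ch (((m/2 : ℕ) : ℤ)) ((k:ℤ) - (l:ℤ)) * ch (((n/2 : ℕ) : ℤ)) (l:ℤ)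
      = (-1:ℤ)^(k/2) * (mult ((m-k)/2) ((n-k)/2) (k/2) : ℤ) := by
  obtain ⟨a, ha⟩ := hm
  obtain ⟨b, hb⟩ := hn
  obtain ⟨c, hc⟩ := hk
  have hsum : ∑ l ∈ Finset.range (k+1),
        (-1:ℤ)^l * ch (((m + n - 2*k)/2 : ℕ) : ℤ) (((m/2 : ℕ) : ℤ) - (l:ℤ))
          * ch (((m/2 : ℕ) : ℤ)) ((k:ℤ) - (l:ℤ)) * ch (((n/2 : ℕ) : ℤ)) (l:ℤ)
      = D ((m-k)/2) ((n-k)/2) (k/2) := by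
    have hlast : F ((m-k)/2) ((n-k)/2) (k/2) (k+1) = 0 := by
      have : 2*((k/2 : ℕ):ℤ)-((k+1:ℕ):ℤ) < 0 := by push_cast; omega
      rw [F, ch_neg this]; ring
    have hD : D ((m-k)/2) ((n-k)/2) (k/2) = ∑ l ∈ Finset.range (k+1), F ((m-k)/2) ((n-k)/2) (k/2) l := by
      rw [D, show 2*(k/2)+2 = (k+1)+1 by omega, Finset.sum_range_succ, hlast, add_zero]
    rw [hD]
    apply Finset.sum_congr rfl
    intro l hl
    rw [F]
    rw [show ((((m+n-2*k)/2 : ℕ)) : ℤ) = (((m-k)/2 : ℕ):ℤ)+(((n-k)/2 : ℕ):ℤ) by omega,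
        show (((m/2 : ℕ)) : ℤ) - (l:ℤ) = (((m-k)/2 : ℕ):ℤ)+(((k/2:ℕ)):ℤ)-(l:ℤ) by omega,
        show (((m/2 : ℕ)) : ℤ) = (((m-k)/2 : ℕ):ℤ)+(((k/2:ℕ)):ℤ) by omega,
        show ((k : ℕ) : ℤ) - (l:ℤ) = 2*(((k/2:ℕ)):ℤ)-(l:ℤ) by omega,
        show (((n/2 : ℕ)) : ℤ) = (((n-k)/2 : ℕ):ℤ)+(((k/2:ℕ)):ℤ) by omega]
  rw [hsum, dixon]
end

section
/- Define c(m,n,k,i,j) = Σ_{l=0}^{k} (-1)^l · C(i+j-k, i-l) · C(m-l, k-l) · C(n-k+l, l). Suppose k > 0 is odd and m ≥ k. Then for every integer i with k ≤ 2i ≤ 2m - k (so that (i,i) lies in the domain for parameters (m, m, k)), one has c(m, m, k, i, i) = 0. -/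
open Finset

lemma ch_symm (a b : ℤ) (ha : 0 ≤ a) : ch a b = ch a (a - b) := by
  unfold ch
  by_cases h1 : 0 ≤ b ∧ b ≤ a
  · rw [if_pos h1, if_pos ⟨by omega, by omega⟩]
    congr 1
    rw [show (a-b).toNat = a.toNat - b.toNat by omega]
    exact (Nat.choose_symm (by omega)).symm
  · rw [if_neg h1, if_neg (by omega)]

theorem stmt_12 (m k i : ℕ) (hk : Odd k) (hk0 : 0 < k) (hkm : k ≤ m)
    (h1 : k ≤ 2*i) (h2 : 2*i ≤ 2*m - k) :
    cg m m k i i = 0 := by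
  have key : cg m m k i i = - cg m m k i i := by
    conv_lhs => rw [cg, ← Finset.sum_range_reflect]
    rw [cg, ← Finset.sum_neg_distrib]
    apply Finset.sum_congr rfl
    intro l hl
    simp only [Finset.mem_range] at hl
    have hlk : l ≤ k := by omega
    have hc1 : ((k + 1 - 1 - l : ℕ) : ℤ) = (k:ℤ) - l := by
      have : k + 1 - 1 - l = k - l := by omega
      rw [this]; push_cast [hlk]; ring
    rw [hc1]
    have hsign : (-1:ℤ)^(k + 1 - 1 - l) = -(-1:ℤ)^l := by
      have he : k + 1 - 1 - l = k - l := by omega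
      rw [he]
      rcases Nat.even_or_odd l with hle | hlo
      · have : Odd (k - l) := Nat.Odd.sub_even hlk hk hle
        rw [this.neg_one_pow, hle.neg_one_pow]
      · have : Even (k - l) := Nat.Odd.sub_odd hk hlo
        rw [this.neg_one_pow, hlo.neg_one_pow]; ring
    rw [hsign]
    have ha : (0:ℤ) ≤ (i:ℤ) + i - k := by push_cast at *; omega
    have hch : ch ((i:ℤ)+(i:ℤ)-(k:ℤ)) ((i:ℤ)-((k:ℤ)-l)) = ch ((i:ℤ)+(i:ℤ)-(k:ℤ)) ((i:ℤ)-l) := by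
      rw [ch_symm _ ((i:ℤ)-l) ha]
      congr 1
      ring
    rw [show (i:ℤ) - ((k:ℤ) - l) = (i:ℤ) - ((k:ℤ)-l) from rfl, hch]
    have e2 : (m:ℤ) - ((k:ℤ) - l) = (m:ℤ) - k + l := by ring
    have e3 : (k:ℤ) - ((k:ℤ) - l) = (l:ℤ) := by ring
    have e4 : (m:ℤ) - k + ((k:ℤ) - l) = (m:ℤ) - l := by ring
    rw [e2, e3, e4]
    ring
  omega
end
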